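/- arXiv:0910.5773 — 6 statements merged into one kernel-verified Lean document; each statement's English description precedes it below -/
import Mathlib

section
/- For a fixed color word u of length n over the alphabet {0,...,l-1} and a fixed subset S of [n-1] containing the descent set of u, there is exactly one vector composition I with l rows such that d(I) = S and c(I) = u. Here d(I) is the set of partial sums of column weights of I, and c(I) is the coloring word of I obtained by reading, for each column from left to right, row indices with multiplicity equal to the corresponding entry. -/
/-!
A column `v` is recovered from its column word (the weakly increasing word with `v r` letters `r`)
by counting letters, and the weakly increasing words over `{0, …, l-1}` are exactly the column
words. So a vector composition `I` with nonzero columns amounts to a factorisation of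
`colorWord I` into nonempty weakly increasing factors, whose lengths form a composition of `n`
with set of proper partial sums `dSet I`. A composition is determined by that set and every
`S ⊆ [n-1]` arises, so the factorisation must cut `u` at the points of `S`; its factors are weakly
increasing because every descent of `u` lies in `S`.
-/

/-- The weight of a column of a vector composition with `l` rows. -/
def colWeight {l : ℕ} (v : Fin l → ℕ) : ℕ := ∑ r, v r

/-- The set `d(I)` of proper partial sums of the column weights of a vector
composition `I`. -/
def dSet {l : ℕ} (I : List (Fin l → ℕ)) : Finset ℕ :=
  (Finset.Ioo 0 I.length).image fun k => ((I.take k).map colWeight).sum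

/-- The coloring word `c(I)` of a vector composition: reading the columns from
left to right and each column from top to bottom, record `I r k` copies of the
color `r` (colors recorded as natural numbers `< l`). -/
def colorWord {l : ℕ} (I : List (Fin l → ℕ)) : List ℕ :=
  I.flatMap fun v => (List.finRange l).flatMap fun (r : Fin l) => List.replicate (v r) (r : ℕ)

/-- The descent set of a word `w₁ … wₙ`: positions `i` (with `1 ≤ i ≤ n-1`)
such that `w_i > w_{i+1}`. -/
def desSet (u : List ℕ) : Finset ℕ :=
  (Finset.Ico 1 u.length).filter fun i => u.getD i 0 < u.getD (i - 1) 0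

open Finset

namespace Composition

variable {n : ℕ}

def innerBoundaries (c : Composition n) : Finset ℕ :=
  (Ioo 0 c.length).image c.sizeUpTo

lemma innerBoundaries_subset (c : Composition n) : c.innerBoundaries ⊆ Ioo 0 n := by
  simp only [innerBoundaries, image_subset_iff, mem_Ioo]
  intro k ⟨hk0, hkl⟩
  exact ⟨(c.sizeUpTo_strict_mono (by omega : 0 < c.length)).trans_le (c.monotone_sizeUpTo hk0),
    (c.sizeUpTo_strict_mono hkl).trans_le (c.sizeUpTo_le _)⟩

lemma image_val_boundaries (c : Composition n) :
    c.boundaries.image Fin.val = insert 0 (insert n c.innerBoundaries) := by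
  ext x
  simp only [boundaries, map_eq_image, image_image, mem_image, mem_univ, true_and, mem_insert,
    innerBoundaries, mem_Ioo]
  constructor
  · rintro ⟨i, rfl⟩
    change c.sizeUpTo i = 0 ∨ c.sizeUpTo i = n ∨ _
    rcases Nat.eq_zero_or_pos (i : ℕ) with h0 | h0
    · simp [h0, sizeUpTo_zero]
    rcases (Nat.lt_succ_iff.1 i.2).lt_or_eq with hl | hl
    · exact .inr (.inr ⟨i, ⟨h0, hl⟩, rfl⟩)
    · simp [hl, sizeUpTo_length]
  · rintro (rfl | rfl | ⟨k, ⟨-, hk⟩, rfl⟩)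
    · exact ⟨0, c.sizeUpTo_zero⟩
    · exact ⟨Fin.last _, c.sizeUpTo_length⟩
    · exact ⟨⟨k, by omega⟩, rfl⟩

lemma innerBoundaries_injective : Function.Injective (innerBoundaries (n := n)) := by
  intro c c' h
  apply (compositionEquiv n).injective
  ext1
  apply image_injective Fin.val_injective
  simp only [compositionEquiv, Equiv.coe_fn_mk, toCompositionAsSet_boundaries,
    image_val_boundaries, h]

lemma exists_innerBoundaries_eq {S : Finset ℕ} (hS : S ⊆ Ioo 0 n) :
    ∃ c : Composition n, c.innerBoundaries = S := by
  have hle : ∀ m ∈ insert 0 (insert n S), m < n + 1 := by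
    simp only [mem_insert]
    rintro m (h | h | h)
    · omega
    · omega
    · exact (mem_Ioo.1 (hS h)).2.trans (Nat.lt_add_one n)
  let cs : CompositionAsSet n :=
    ⟨(insert 0 (insert n S)).attachFin hle, by simp [mem_attachFin], by simp [mem_attachFin]⟩
  have hcancel (T : Finset ℕ) (hT : T ⊆ Ioo 0 n) : insert 0 (insert n T) ∩ Ioo 0 n = T := by
    rw [insert_inter_of_notMem (by simp), insert_inter_of_notMem (by simp), inter_eq_left.2 hT]
  refine ⟨cs.toComposition, ?_⟩
  have h := cs.toComposition.image_val_boundaries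
  rw [CompositionAsSet.toComposition_boundaries, image_val_attachFin] at h
  rw [← hcancel _ cs.toComposition.innerBoundaries_subset, ← h, hcancel S hS]

lemma notMem_innerBoundaries_of_lt_of_lt (c : Composition n) {i j : ℕ} (h₁ : c.sizeUpTo i < j)
    (h₂ : j < c.sizeUpTo (i + 1)) : j ∉ c.innerBoundaries := by
  simp only [innerBoundaries, mem_image, not_exists, not_and]
  rintro k - rfl
  have := c.monotone_sizeUpTo.reflect_lt h₁
  have := c.monotone_sizeUpTo.reflect_lt h₂
  omega

end Composition

lemma sortedLE_drop_take_of_notMem_desSet {u : List ℕ} {a b : ℕ}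
    (h : ∀ p, a < p → p < b → p ∉ desSet u) : ((u.take b).drop a).SortedLE := by
  rw [List.sortedLE_iff_isChain, List.isChain_iff_getElem]
  intro j hj
  simp only [List.length_drop, List.length_take] at hj
  have hp := h (a + j + 1) (by omega) (by omega)
  simp only [desSet, mem_filter, mem_Ico, not_and, not_lt] at hp
  have hp := hp ⟨by omega, by omega⟩
  rw [List.getD_eq_getElem _ _ (by omega), List.getD_eq_getElem _ _ (by omega)] at hp
  simpa [Nat.add_assoc] using hp

lemma sortedLE_of_mem_splitWrtComposition {u : List ℕ} {c : Composition u.length}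
    (hdes : desSet u ⊆ c.innerBoundaries) {w : List ℕ} (hw : w ∈ u.splitWrtComposition c) :
    w.SortedLE := by
  obtain ⟨i, hi, rfl⟩ := List.getElem_of_mem hw
  rw [List.getElem_splitWrtComposition]
  exact sortedLE_drop_take_of_notMem_desSet fun p h₁ h₂ hp ↦
    c.notMem_innerBoundaries_of_lt_of_lt h₁ h₂ (hdes hp)

section VectorComposition

variable {l : ℕ}

def columnWord (v : Fin l → ℕ) : List ℕ :=
  (List.finRange l).flatMap fun r => List.replicate (v r) (r : ℕ)

lemma colorWord_eq_flatten_map (I : List (Fin l → ℕ)) :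
    colorWord I = (I.map columnWord).flatten :=
  rfl

lemma length_columnWord (v : Fin l → ℕ) : (columnWord v).length = colWeight v := by
  simp [columnWord, List.length_flatMap, colWeight, Fin.sum_univ_def]

lemma count_columnWord (v : Fin l → ℕ) (r : Fin l) : (columnWord v).count (r : ℕ) = v r := by
  simp [columnWord, List.count_flatMap, List.count_replicate, ← Fin.sum_univ_def, Fin.val_inj]

lemma columnWord_injective : Function.Injective (columnWord (l := l)) := fun v w h ↦
  funext fun r ↦ by rw [← count_columnWord v r, h, count_columnWord]

lemma sortedLE_columnWord (v : Fin l → ℕ) : (columnWord v).SortedLE := by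
  rw [List.sortedLE_iff_pairwise, columnWord, List.pairwise_flatMap]
  refine ⟨fun r _ ↦ (List.sortedLE_replicate _).pairwise,
    (List.pairwise_lt_finRange l).imp fun hab x hx y hy ↦ ?_⟩
  rw [List.eq_of_mem_replicate hx, List.eq_of_mem_replicate hy]
  exact hab.le

lemma lt_of_mem_columnWord {v : Fin l → ℕ} {x : ℕ} (hx : x ∈ columnWord v) : x < l := by
  obtain ⟨r, -, hr⟩ := List.mem_flatMap.1 hx
  exact List.eq_of_mem_replicate hr ▸ r.isLt

lemma columnWord_count {w : List ℕ} (hw : w.SortedLE) (hwl : ∀ x ∈ w, x < l) :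
    columnWord (fun r : Fin l ↦ w.count (r : ℕ)) = w := by
  refine (List.perm_iff_count.2 fun x ↦ ?_).eq_of_sortedLE (sortedLE_columnWord _) hw
  by_cases hx : x < l
  · exact count_columnWord _ ⟨x, hx⟩
  · rw [List.count_eq_zero.2 (hx ∘ lt_of_mem_columnWord), List.count_eq_zero.2 (hx ∘ hwl x)]

lemma map_length_map_columnWord (I : List (Fin l → ℕ)) :
    (I.map columnWord).map List.length = I.map colWeight := by
  simp only [List.map_map, Function.comp_def, length_columnWord]

lemma length_colorWord (I : List (Fin l → ℕ)) :
    (colorWord I).length = (I.map colWeight).sum := by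
  rw [colorWord_eq_flatten_map, List.length_flatten, map_length_map_columnWord]

lemma colWeight_pos {v : Fin l → ℕ} : 0 < colWeight v ↔ v ≠ 0 := by
  simp [colWeight, Nat.pos_iff_ne_zero, Finset.sum_eq_zero_iff, funext_iff]

lemma dSet_eq_innerBoundaries {I : List (Fin l → ℕ)} {m : ℕ} {c : Composition m}
    (hc : I.map colWeight = c.blocks) : dSet I = c.innerBoundaries := by
  unfold dSet Composition.innerBoundaries Composition.sizeUpTo Composition.length
  simp only [← hc, List.map_take, List.length_map]

lemma map_columnWord_eq_splitWrtComposition {u : List ℕ} {c : Composition u.length}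
    {I : List (Fin l → ℕ)} (hI : ∀ v ∈ I, v ≠ 0) (hIu : colorWord I = u)
    (hc : c.innerBoundaries = dSet I) : I.map columnWord = u.splitWrtComposition c := by
  subst hIu
  let c' : Composition (colorWord I).length :=
    ⟨I.map colWeight, by simpa [colWeight_pos] using hI, (length_colorWord I).symm⟩
  obtain rfl : c = c' :=
    Composition.innerBoundaries_injective (hc.trans (dSet_eq_innerBoundaries rfl))
  exact (List.splitWrtComposition_flatten _ c' (map_length_map_columnWord I)).symm

lemma exists_colorWord_eq {u : List ℕ} (hu : ∀ x ∈ u, x < l) {c : Composition u.length}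
    (hdes : desSet u ⊆ c.innerBoundaries) :
    ∃ I : List (Fin l → ℕ),
      (∀ v ∈ I, v ≠ 0) ∧ dSet I = c.innerBoundaries ∧ colorWord I = u := by
  set B := u.splitWrtComposition c
  have hcount (w) (hw : w ∈ B) : columnWord (fun r : Fin l ↦ w.count (r : ℕ)) = w :=
    columnWord_count (sortedLE_of_mem_splitWrtComposition hdes hw)
      fun x hx ↦ hu x (List.flatten_splitWrtComposition u c ▸ List.mem_flatten_of_mem hw hx)
  set I := B.map fun w (r : Fin l) ↦ w.count (r : ℕ)
  have hI : I.map columnWord = B := by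
    simp only [I, List.map_map]
    exact (List.map_congr_left fun w hw ↦ hcount w hw).trans B.map_id
  have hweights : I.map colWeight = c.blocks :=
    calc I.map colWeight = (I.map columnWord).map List.length := (map_length_map_columnWord I).symm
      _ = c.blocks := by rw [hI, List.map_length_splitWrtComposition]
  refine ⟨I, fun v hv ↦ colWeight_pos.1 (c.blocks_pos (hweights ▸ List.mem_map_of_mem hv)),
    dSet_eq_innerBoundaries hweights, ?_⟩
  rw [colorWord_eq_flatten_map, hI, List.flatten_splitWrtComposition]

end VectorComposition

/-- For a fixed color word `u` of length `n` over `{0, …, l-1}` and a fixed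
subset `S ⊆ [n-1]` containing the descent set of `u`, there is exactly one
vector composition `I` with `l` rows such that `d(I) = S` and `c(I) = u`. -/
theorem existsUnique_vector_composition (l n : ℕ) (S : Finset ℕ) (u : List ℕ)
    (hu : u.length = n) (hcol : ∀ x ∈ u, x < l)
    (hS : S ⊆ Finset.Ico 1 n) (hdes : desSet u ⊆ S) :
    ∃! I : List (Fin l → ℕ),
      (∀ v ∈ I, v ≠ 0) ∧ dSet I = S ∧ colorWord I = u := by
  subst hu
  obtain ⟨c, rfl⟩ :=
    Composition.exists_innerBoundaries_eq (hS.trans_eq (Finset.Ico_add_one_left_eq_Ioo 0 _))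
  obtain ⟨I, hI, hId, hIu⟩ := exists_colorWord_eq hcol hdes
  refine ⟨I, ⟨hI, hId, hIu⟩, fun J ⟨hJ, hJd, hJu⟩ ↦ ?_⟩
  apply List.map_injective_iff.2 columnWord_injective
  rw [map_columnWord_eq_splitWrtComposition hJ hJu hJd.symm,
    map_columnWord_eq_splitWrtComposition hI hIu hId.symm]
end

section
/- Let H be a connected N^l-graded Hopf algebra and φ, ψ characters (multiplicative unital linear functionals) on H. If C is a graded subcoalgebra of H such that (φ - ψ) vanishes on all elements of C of degree n with n ≤ k, then the subalgebra generated by C has the same property; in particular, the largest such graded subcoalgebra S_k(φ,ψ) is closed under multiplication (using (φ-ψ)(xy) = (φ-ψ)(x)φ(y) + ψ(x)(φ-ψ)(y)). -/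
/-!
The degree-`n` component of a product is a sum of products of components whose degrees add up
to `n`, hence lie below `n`. As `φ` and `ψ` are multiplicative, the elements whose components in
a lower set of degrees are equalized by `φ` and `ψ` therefore form a subalgebra, and a graded
subspace `C` lies in it as soon as its homogeneous elements of those degrees do.
-/

open TensorProduct

/-- `ℬ` is a connected `ℕ^l`-grading of `H`. -/
def IsConnectedGraded {l : ℕ} {H : Type*} [Ring H] [Bialgebra ℚ H]
    (ℬ : (Fin l → ℕ) → Submodule ℚ H) : Prop :=
  DirectSum.IsInternal ℬ ∧
  ℬ 0 = Submodule.span ℚ {(1 : H)} ∧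
  (∀ i j : Fin l → ℕ, ∀ a ∈ ℬ i, ∀ b ∈ ℬ j, a * b ∈ ℬ (i + j)) ∧
  (∀ n : Fin l → ℕ, ∀ h ∈ ℬ n,
    Coalgebra.comul (R := ℚ) h ∈
      ⨆ (i : Fin l → ℕ) (j : Fin l → ℕ) (_ : i + j = n),
        LinearMap.range (TensorProduct.map (ℬ i).subtype (ℬ j).subtype)) ∧
  (∀ n : Fin l → ℕ, n ≠ 0 → ∀ h ∈ ℬ n, Coalgebra.counit (R := ℚ) h = 0)

open DirectSum

theorem Submodule.isHomogeneous_of_le_iSup_inf {ι R M : Type*} [DecidableEq ι] [Semiring R]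
    [AddCommMonoid M] [Module R M] (ℳ : ι → Submodule R M) [Decomposition ℳ]
    {p : Submodule R M} (hp : p ≤ ⨆ i, p ⊓ ℳ i) : p.IsHomogeneous ℳ := by
  intro n x hx
  replace hx := hp hx
  induction hx using Submodule.iSup_induction' with
  | mem m y hy =>
    by_cases hmn : m = n
    · subst hmn
      rw [decompose_of_mem_same ℳ hy.2]
      exact hy.1
    · rw [decompose_of_mem_ne ℳ hy.2 hmn]
      exact p.zero_mem
  | zero => simp
  | add y z _ _ hy hz =>
    rw [decompose_add, DirectSum.add_apply, Submodule.coe_add]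
    exact p.add_mem hy hz

noncomputable abbrev IsConnectedGraded.toGradedAlgebra {l : ℕ} {H : Type*} [Ring H]
    [Bialgebra ℚ H] {ℬ : (Fin l → ℕ) → Submodule ℚ H} (hgr : IsConnectedGraded ℬ) :
    GradedAlgebra ℬ where
  one_mem := hgr.2.1 ▸ Submodule.mem_span_singleton_self 1
  mul_mem _ _ _ _ ha hb := hgr.2.2.1 _ _ _ ha _ hb
  __ := hgr.1.chooseDecomposition

namespace AlgHom

variable {ι R A S : Type*} [DecidableEq ι] [AddCommMonoid ι] [PartialOrder ι]
  [CanonicallyOrderedAdd ι] [CommSemiring R] [Semiring A] [Algebra R A] [Semiring S]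
  [Algebra R S] (𝒜 : ι → Submodule R A) [GradedAlgebra 𝒜]

def gradedEqualizer (φ ψ : A →ₐ[R] S) {D : Set ι} (hD : IsLowerSet D) : Subalgebra R A where
  carrier := {x | ∀ n ∈ D, φ (decompose 𝒜 x n) = ψ (decompose 𝒜 x n)}
  algebraMap_mem' r n _ := by
    by_cases h0 : 0 = n
    · subst h0
      rw [decompose_of_mem_same 𝒜 (SetLike.algebraMap_mem_graded 𝒜 r), φ.commutes, ψ.commutes]
    · rw [decompose_of_mem_ne 𝒜 (SetLike.algebraMap_mem_graded 𝒜 r) h0, map_zero, map_zero]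
  add_mem' {x y} hx hy n hn := by
    simp only [decompose_add, DirectSum.add_apply, Submodule.coe_add, map_add, hx n hn, hy n hn]
  mul_mem' {x y} hx hy n hn := by
    classical
    rw [decompose_mul, coe_mul_apply, map_sum, map_sum]
    refine Finset.sum_congr rfl fun ij hij => ?_
    have hsum : ij.1 + ij.2 ∈ D := (Finset.mem_filter.1 hij).2 ▸ hn
    rw [map_mul, map_mul, hx _ (hD le_self_add hsum), hy _ (hD le_add_self hsum)]

end AlgHom

theorem subalgebra_generated_vanishing_general {l : ℕ} {H : Type*} [Ring H]
    [HopfAlgebra ℚ H]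
    (ℬ : (Fin l → ℕ) → Submodule ℚ H) (hgr : IsConnectedGraded ℬ)
    (k : Fin l → ℕ∞) (φ ψ : H →ₐ[ℚ] ℚ) (C : Submodule ℚ H)
    (hCgraded : C ≤ ⨆ n : Fin l → ℕ, C ⊓ ℬ n)
    (hCvanish : ∀ n : Fin l → ℕ, (∀ i, (n i : ℕ∞) ≤ k i) →
      ∀ h ∈ C ⊓ ℬ n, φ h = ψ h) :
    ∀ n : Fin l → ℕ, (∀ i, (n i : ℕ∞) ≤ k i) →
      ∀ h ∈ Subalgebra.toSubmodule (Algebra.adjoin ℚ (C : Set H)) ⊓ ℬ n,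
        φ h = ψ h := by
  let := hgr.toGradedAlgebra
  have hD : IsLowerSet {n : Fin l → ℕ | ∀ i, (n i : ℕ∞) ≤ k i} := fun a b hba ha i =>
    (Nat.cast_le.2 (hba i)).trans (ha i)
  have hC := Submodule.isHomogeneous_of_le_iSup_inf ℬ hCgraded
  have hadjoin : Algebra.adjoin ℚ (C : Set H) ≤ AlgHom.gradedEqualizer ℬ φ ψ hD :=
    Algebra.adjoin_le fun c hc n hn => hCvanish n hn _ ⟨hC n hc, Submodule.coe_mem _⟩
  rintro n hn h ⟨hadj, hh⟩
  simpa only [decompose_of_mem_same ℬ hh] using hadjoin hadj n hn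

/-- Let `H` be a connected `ℕ^l`-graded Hopf algebra, `φ, ψ` characters on `H`
and `k ∈ (ℕ ∪ {∞})^l`.  If `C` is a graded subcoalgebra of `H` such that
`φ - ψ` vanishes on all elements of `C` of degree `n` with `n ≤ k`, then the
subalgebra generated by `C` has the same property (in particular the largest
such graded subcoalgebra `S_k(φ,ψ)` is closed under multiplication). -/
theorem subalgebra_generated_vanishing {l : ℕ} {H : Type*} [Ring H]
    [HopfAlgebra ℚ H]
    (ℬ : (Fin l → ℕ) → Submodule ℚ H) (hgr : IsConnectedGraded ℬ)
    (k : Fin l → ℕ∞) (φ ψ : H →ₐ[ℚ] ℚ) (C : Submodule ℚ H)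
    (hCgraded : C ≤ ⨆ n : Fin l → ℕ, C ⊓ ℬ n)
    (hCsubcoalg : ∀ h ∈ C, Coalgebra.comul (R := ℚ) h ∈
      LinearMap.range (TensorProduct.map C.subtype C.subtype))
    (hCvanish : ∀ n : Fin l → ℕ, (∀ i, (n i : ℕ∞) ≤ k i) →
      ∀ h ∈ C ⊓ ℬ n, φ h = ψ h) :
    ∀ n : Fin l → ℕ, (∀ i, (n i : ℕ∞) ≤ k i) →
      ∀ h ∈ Subalgebra.toSubmodule (Algebra.adjoin ℚ (C : Set H)) ⊓ ℬ n,
        φ h = ψ h :=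
  subalgebra_generated_vanishing_general ℬ hgr k φ ψ C hCgraded hCvanish
end

section
/- With Φ and S related by Σ_{n≠0} (Φ_n/|n|) t^n = log(1 + Σ_{n≠0} S_n t^n), exponentiating gives S_n = Σ_{I ⊨ n} (1/sp(I)) Φ^I, where for I = (i_1,...,i_m), sp(I) = m! · |i_1|·|i_2|···|i_m| and Φ^I = Φ_{i_1}···Φ_{i_m}. -/
/-- `I` is a vector composition of `n ∈ ℕ^l`: a list of nonzero vectors in
`ℕ^l` summing to `n`. -/
def IsVComp {l : ℕ} (n : Fin l → ℕ) (I : List (Fin l → ℕ)) : Prop :=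
  (∀ v ∈ I, v ≠ 0) ∧ I.sum = n

/-!
Write `ℓ k = (-1) ^ (k + 1) / k` for the coefficients of `log (1 + x)` and `|v| = ∑ i, v i`.
The hypothesis says `Φ v = |v| • ∑_{J ⊨ v} ℓ (len J) • S^J`. Substituting this into `Φ^I`, the
factors `|v|` cancel against `sp(I)`, and expanding the (noncommutative) product turns the sum over
`I ⊨ n` into a sum over lists `(J₁, …, Jₘ)` with `Jₖ ⊨ iₖ`. Such a list is the same as its
concatenation `K ⊨ n` together with the composition `(len J₁, …, len Jₘ)` of `len K`, so the sum
becomes `∑_{K ⊨ n} e (len K) • S^K`, where `e N = ∑_{(c₁, …, cₖ) ⊨ N} ℓ c₁ ⋯ ℓ cₖ / k!` is the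
coefficient of `x ^ N` in `exp (log (1 + x)) = 1 + x`. Hence `e 1 = 1`, `e N = 0` for `N ≥ 2`,
and only `K = [n]` survives.
-/

open FormalMultilinearSeries NormedSpace

def logCoeff (k : ℕ) : ℚ := (-1) ^ (k + 1) / k

def expLogWeight (L : List ℕ) : ℚ := (L.length.factorial : ℚ)⁻¹ * (L.map logCoeff).prod

/-- The coefficient of `x ^ N` in `exp (log (1 + x))`, expanded over the compositions of `N`. -/
def expLogCoeff (N : ℕ) : ℚ := ∑ c : Composition N, expLogWeight c.blocks

theorem hasFPowerSeriesAt_exp_log_one_add :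
    HasFPowerSeriesAt (fun x : ℝ => Real.exp (Real.log (1 + x)))
      ((expSeries ℝ ℝ).comp (ofScalars ℝ fun n ↦ -(-1 : ℝ) ^ n / n)) 0 := by
  have hexp : HasFPowerSeriesAt NormedSpace.exp (expSeries ℝ ℝ) (Real.log (1 + 0)) := by
    simpa using hasFPowerSeriesAt_exp_zero_of_radius_pos (expSeries_radius_pos ℝ ℝ)
  rw [Real.exp_eq_exp_ℝ]
  exact hexp.comp (f := fun x => Real.log (1 + x)) hasFPowerSeriesAt_log_one_add

theorem compAlongComposition_exp_log_apply_one {N : ℕ} (c : Composition N) :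
    (expSeries ℝ ℝ).compAlongComposition (ofScalars ℝ fun n ↦ -(-1 : ℝ) ^ n / n) c 1 =
      expLogWeight c.blocks := by
  have hblocks : c.blocks.map logCoeff = List.ofFn (logCoeff ∘ c.blocksFun) := by
    rw [← c.ofFn_blocksFun, List.map_ofFn]
  rw [compAlongComposition_apply, expSeries, _root_.smul_apply,
    ContinuousMultilinearMap.mkPiAlgebraFin_apply, smul_eq_mul, expLogWeight, hblocks,
    Rat.cast_mul, Rat.cast_list_prod, List.map_ofFn]
  push_cast
  congr 3
  funext i
  simp [applyComposition, logCoeff, pow_succ]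

-- Compare the Taylor series at `0` of both sides of `exp (log (1 + x)) = 1 + x`.
theorem expLogCoeff_eq (N : ℕ) : expLogCoeff N = if N ≤ 1 then 1 else 0 := by
  have h1x : HasFPowerSeriesAt (fun x : ℝ => Real.exp (Real.log (1 + x)))
      (constFormalMultilinearSeries ℝ ℝ 1 + (ContinuousLinearMap.id ℝ ℝ).fpowerSeries 0) 0 := by
    refine (hasFPowerSeriesAt_const.add
      ((ContinuousLinearMap.id ℝ ℝ).hasFPowerSeriesAt 0)).congr ?_
    filter_upwards [Ioi_mem_nhds (show (-1 : ℝ) < 0 by norm_num)] with x hx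
    rw [Real.exp_log (by linarith [Set.mem_Ioi.1 hx])]
    simp
  have h := congrArg (fun p => p N 1)
    (hasFPowerSeriesAt_exp_log_one_add.eq_formalMultilinearSeries h1x)
  simp only [FormalMultilinearSeries.comp, sum_apply,
    compAlongComposition_exp_log_apply_one] at h
  rw [← (Rat.cast_injective (α := ℝ)).eq_iff, expLogCoeff, Rat.cast_sum, h]
  rcases N with _ | _ | N <;> simp [ContinuousLinearMap.fpowerSeries]

theorem Composition.heq_of_blocks_eq {m n : ℕ} {c : Composition m} {d : Composition n}
    (h : c.blocks = d.blocks) : c ≍ d := by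
  obtain rfl : m = n := by rw [← c.blocks_sum, ← d.blocks_sum, h]
  exact heq_of_eq (Composition.ext h)

def Composition.ofLengths {α : Type*} (P : List (List α)) (hP : ∀ J ∈ P, J ≠ []) :
    Composition P.flatten.length where
  blocks := P.map List.length
  blocks_pos := by simpa [List.length_pos_iff] using hP
  blocks_sum := by simp [List.length_flatten]

theorem List.prod_map_smul_eq_smul_prod {ι R M : Type*} [CommMonoid R] [Monoid M]
    [MulAction R M] [IsScalarTower R M M] [SMulCommClass R M M] (q : ι → R) (x : ι → M)
    (L : List ι) :
    (L.map fun i => q i • x i).prod = (L.map q).prod • (L.map x).prod := by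
  induction L with
  | nil => simp
  | cons i L ih => simp only [List.map_cons, List.prod_cons, ih, smul_mul_smul_comm]

def sectionsFinset {α β : Type*} [DecidableEq β] (t : α → Finset β) : List α → Finset (List β)
  | [] => {[]}
  | a :: I => (t a ×ˢ sectionsFinset t I).image fun p => p.1 :: p.2

theorem mem_sectionsFinset {α β : Type*} [DecidableEq β] {t : α → Finset β} {I : List α}
    {P : List β} : P ∈ sectionsFinset t I ↔ List.Forall₂ (fun b a => b ∈ t a) P I := by
  induction I generalizing P with
  | nil => simp [sectionsFinset]
  | cons a I ih =>
    cases P <;> simp [sectionsFinset, ih]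

theorem prod_map_sum_eq_sum_sectionsFinset {α β R : Type*} [DecidableEq β] [Semiring R]
    (t : α → Finset β) (g : β → R) (I : List α) :
    (I.map fun a => ∑ b ∈ t a, g b).prod = ∑ P ∈ sectionsFinset t I, (P.map g).prod := by
  induction I with
  | nil => simp [sectionsFinset]
  | cons a I ih =>
    rw [sectionsFinset, Finset.sum_image fun _ _ _ _ h => Prod.ext_iff.2 (List.cons_eq_cons.1 h)]
    simp [ih, Finset.sum_product, Finset.sum_mul_sum]

section VectorCompositions

variable {l : ℕ}

theorem sum_ne_zero_of_ne_zero {v : Fin l → ℕ} (hv : v ≠ 0) : ∑ i, v i ≠ 0 := by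
  simpa [Finset.sum_eq_zero_iff, funext_iff] using hv

theorem IsVComp.le {n : Fin l → ℕ} {I : List (Fin l → ℕ)} (h : IsVComp n I) {v : Fin l → ℕ}
    (hv : v ∈ I) : v ≤ n :=
  h.2 ▸ List.le_sum_of_mem hv

theorem length_le_sum_apply_sum {I : List (Fin l → ℕ)} (hI : ∀ v ∈ I, v ≠ 0) :
    I.length ≤ ∑ i, I.sum i := by
  induction I with
  | nil => simp
  | cons v I ih =>
    simp only [List.length_cons, List.sum_cons, Pi.add_apply, Finset.sum_add_distrib]
    have hv := Nat.pos_of_ne_zero (sum_ne_zero_of_ne_zero (hI v List.mem_cons_self))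
    have hI' := ih fun u hu => hI u (List.mem_cons_of_mem v hu)
    omega

theorem setOf_isVComp_finite (n : Fin l → ℕ) : {I | IsVComp n I}.Finite := by
  have := (Set.finite_Iic n).to_subtype
  refine ((List.finite_length_le (Set.Iic n) (∑ i, n i)).image (List.map Subtype.val)).subset ?_
  intro I hI
  refine ⟨I.attach.map fun v => ⟨v.1, hI.le v.2⟩, ?_, by simp⟩
  simpa [← hI.2] using length_le_sum_apply_sum hI.1

noncomputable def vcomps (n : Fin l → ℕ) : Finset (List (Fin l → ℕ)) :=
  (setOf_isVComp_finite n).toFinset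

theorem mem_vcomps {n : Fin l → ℕ} {I : List (Fin l → ℕ)} : I ∈ vcomps n ↔ IsVComp n I :=
  Set.Finite.mem_toFinset _

theorem finsum_mem_setOf_isVComp {M : Type*} [AddCommMonoid M] (n : Fin l → ℕ)
    (f : List (Fin l → ℕ) → M) : ∑ᶠ I ∈ {I | IsVComp n I}, f I = ∑ I ∈ vcomps n, f I :=
  finsum_mem_eq_finite_toFinset_sum f (setOf_isVComp_finite n)

theorem IsVComp.eq_singleton {n : Fin l → ℕ} {K : List (Fin l → ℕ)} (h : IsVComp n K)
    (hn : n ≠ 0) (hK : K.length ≤ 1) : K = [n] := by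
  match K, h with
  | [], ⟨_, hsum⟩ => exact absurd hsum.symm (by simpa using hn)
  | [v], ⟨_, hsum⟩ => simp_all
  | _ :: _ :: _, _ => simp at hK

theorem mem_sectionsFinset_vcomps {P : List (List (Fin l → ℕ))} {I : List (Fin l → ℕ)} :
    P ∈ sectionsFinset vcomps I ↔ (∀ J ∈ P, ∀ v ∈ J, v ≠ 0) ∧ P.map List.sum = I := by
  rw [mem_sectionsFinset]
  constructor
  · intro h
    induction h with
    | nil => simp
    | cons hJ _ ih =>
      obtain ⟨hJ0, rfl⟩ := mem_vcomps.1 hJ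
      rw [List.map_cons, ih.2]
      exact ⟨List.forall_mem_cons.2 ⟨hJ0, ih.1⟩, rfl⟩
  · rintro ⟨h, rfl⟩
    rw [List.forall₂_map_right_iff]
    exact List.forall₂_same.2 fun J hJ => mem_vcomps.2 ⟨h J hJ, rfl⟩

theorem IsVComp.flatten {n : Fin l → ℕ} {P : List (List (Fin l → ℕ))}
    (hP : ∀ J ∈ P, ∀ v ∈ J, v ≠ 0) (h : IsVComp n (P.map List.sum)) : IsVComp n P.flatten := by
  refine ⟨fun v hv => ?_, by rw [List.sum_flatten, h.2]⟩
  obtain ⟨J, hJ, hvJ⟩ := List.mem_flatten.1 hv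
  exact hP J hJ v hvJ

theorem IsVComp.map_sum_splitWrtComposition {n : Fin l → ℕ} {K : List (Fin l → ℕ)}
    (h : IsVComp n K) (c : Composition K.length) :
    IsVComp n ((K.splitWrtComposition c).map List.sum) := by
  refine ⟨fun v hv => ?_, by rw [← List.sum_flatten, List.flatten_splitWrtComposition, h.2]⟩
  obtain ⟨J, hJ, rfl⟩ := List.mem_map.1 hv
  obtain ⟨u, hu⟩ := List.exists_mem_of_length_pos (List.length_pos_of_mem_splitWrtComposition hJ)
  have hK : u ∈ K := List.flatten_splitWrtComposition K c ▸ List.mem_flatten_of_mem hJ hu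
  exact fun h0 => h.1 u hK (List.sum_eq_zero_iff.1 h0 u hu)

theorem splitWrtComposition_flatten_ofLengths {α : Type*} (P : List (List α))
    (hP : ∀ J ∈ P, J ≠ []) : P.flatten.splitWrtComposition (Composition.ofLengths P hP) = P :=
  List.splitWrtComposition_flatten _ _ rfl

-- A list of vector compositions of the parts of a vector composition of `n` is the same as a
-- vector composition of `n` (their concatenation) together with a composition of its length.
theorem sum_vcomps_sum_sectionsFinset {M : Type*} [AddCommMonoid M] (n : Fin l → ℕ)
    (F : List (List (Fin l → ℕ)) → M) :
    ∑ I ∈ vcomps n, ∑ P ∈ sectionsFinset vcomps I, F P =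
      ∑ K ∈ vcomps n, ∑ c : Composition K.length, F (K.splitWrtComposition c) := by
  simp only [Finset.sum_sigma']
  refine Finset.sum_bij'
    (fun x hx => ⟨x.2.flatten, Composition.ofLengths x.2 fun J hJ hJ0 => ?_⟩)
    (fun y _ => ⟨(y.1.splitWrtComposition y.2).map List.sum, y.1.splitWrtComposition y.2⟩)
    ?_ ?_ ?_ ?_ ?_
  · simp only [Finset.mem_sigma, mem_vcomps, mem_sectionsFinset_vcomps] at hx
    obtain ⟨hI, -, hPI⟩ := hx
    exact hI.1 J.sum (hPI ▸ List.mem_map_of_mem hJ) (by simp [hJ0])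
  · rintro ⟨I, P⟩ hx
    simp only [Finset.mem_sigma, mem_vcomps, mem_sectionsFinset_vcomps] at hx ⊢
    obtain ⟨hI, hP, rfl⟩ := hx
    exact ⟨hI.flatten hP, Finset.mem_univ _⟩
  · rintro ⟨K, c⟩ hy
    rw [Finset.mem_sigma, mem_vcomps] at hy
    rw [Finset.mem_sigma, mem_vcomps, mem_sectionsFinset_vcomps]
    refine ⟨hy.1.map_sum_splitWrtComposition c, fun J hJ v hv => hy.1.1 v ?_, rfl⟩
    have hvK := List.mem_flatten_of_mem hJ hv
    rwa [List.flatten_splitWrtComposition] at hvK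
  · rintro ⟨I, P⟩ hx
    simp only [Finset.mem_sigma, mem_vcomps, mem_sectionsFinset_vcomps] at hx
    obtain ⟨-, -, rfl⟩ := hx
    rw [splitWrtComposition_flatten_ofLengths]
  · rintro ⟨K, c⟩ -
    exact Sigma.ext (List.flatten_splitWrtComposition K c)
      (Composition.heq_of_blocks_eq (List.map_length_splitWrtComposition K c))
  · rintro ⟨I, P⟩ -
    rw [splitWrtComposition_flatten_ofLengths]

theorem sum_vcomps_expLogCoeff_smul {M : Type*} [AddCommMonoid M] [Module ℚ M]
    {n : Fin l → ℕ} (hn : n ≠ 0) (f : List (Fin l → ℕ) → M) :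
    ∑ K ∈ vcomps n, expLogCoeff K.length • f K = f [n] := by
  have hn' : [n] ∈ vcomps n := mem_vcomps.2 ⟨by simpa using hn, by simp⟩
  rw [Finset.sum_eq_single_of_mem [n] hn' fun K hKmem hKn => ?_]
  · simp [expLogCoeff_eq]
  have hK : 1 < K.length := by
    by_contra! hK
    exact hKn ((mem_vcomps.1 hKmem).eq_singleton hn hK)
  simp [expLogCoeff_eq, hK.not_ge]

theorem smul_prod_map_eq_sum_sectionsFinset {A : Type*} [Ring A] [Algebra ℚ A]
    {S Φ : (Fin l → ℕ) → A}
    (hΦ : ∀ v, v ≠ 0 → Φ v =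
      ((∑ i, v i : ℕ) : ℚ) • ∑ J ∈ vcomps v, logCoeff J.length • (J.map S).prod)
    {I : List (Fin l → ℕ)} (hI : ∀ v ∈ I, v ≠ 0) :
    ((I.length.factorial : ℚ) * (I.map fun v => ((∑ i, v i : ℕ) : ℚ)).prod)⁻¹ • (I.map Φ).prod =
      ∑ P ∈ sectionsFinset vcomps I, expLogWeight (P.map List.length) • (P.flatten.map S).prod := by
  have hdeg : (I.map fun v => ((∑ i, v i : ℕ) : ℚ)).prod ≠ 0 :=
    List.prod_ne_zero fun h0 => by
      obtain ⟨v, hv, h⟩ := List.mem_map.1 h0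
      exact sum_ne_zero_of_ne_zero (hI v hv) (Nat.cast_eq_zero.1 h)
  rw [List.map_congr_left fun v hv => hΦ v (hI v hv), List.prod_map_smul_eq_smul_prod, mul_inv,
    mul_smul, inv_smul_smul₀ hdeg, prod_map_sum_eq_sum_sectionsFinset, Finset.smul_sum]
  refine Finset.sum_congr rfl fun P hP => ?_
  rw [List.prod_map_smul_eq_smul_prod, smul_smul, expLogWeight, List.length_map,
    (mem_sectionsFinset.1 hP).length_eq, List.map_map, List.map_flatten, List.prod_flatten,
    List.map_map]
  rfl

end VectorCompositions

/-- With `Φ` and `S` related by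
`Σ_{n≠0} (Φ_n/|n|) t^n = log(1 + Σ_{n≠0} S_n t^n)` (expressed coefficientwise
as the hypothesis `hlog`), exponentiating gives
`S_n = Σ_{I ⊨ n} (1/sp(I)) Φ^I`, where for `I = (i_1,…,i_m)` one sets
`sp(I) = m! · |i_1|·|i_2|···|i_m|` and `Φ^I = Φ_{i_1}···Φ_{i_m}`. -/
theorem S_in_terms_of_phi {l : ℕ} {A : Type*} [Ring A] [Algebra ℚ A]
    (S Φ : (Fin l → ℕ) → A)
    (hlog : ∀ n : Fin l → ℕ, n ≠ 0 →
      (((∑ i, n i : ℕ) : ℚ))⁻¹ • Φ n =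
        ∑ᶠ I ∈ {I : List (Fin l → ℕ) | IsVComp n I},
          ((-1 : ℚ) ^ (I.length + 1) / (I.length : ℚ)) • (I.map S).prod) :
    ∀ n : Fin l → ℕ, n ≠ 0 →
      S n = ∑ᶠ I ∈ {I : List (Fin l → ℕ) | IsVComp n I},
        ((I.length.factorial : ℚ) *
            (I.map fun v => ((∑ i, v i : ℕ) : ℚ)).prod)⁻¹ • (I.map Φ).prod := by
  intro n hn
  have hΦ : ∀ v, v ≠ 0 → Φ v =
      ((∑ i, v i : ℕ) : ℚ) • ∑ J ∈ vcomps v, logCoeff J.length • (J.map S).prod := by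
    intro v hv
    rw [← inv_smul_eq_iff₀ (Nat.cast_ne_zero.2 (sum_ne_zero_of_ne_zero hv)), hlog v hv,
      finsum_mem_setOf_isVComp]
    rfl
  rw [finsum_mem_setOf_isVComp]
  calc S n = ∑ K ∈ vcomps n, expLogCoeff K.length • (K.map S).prod := by
        rw [sum_vcomps_expLogCoeff_smul hn]
        simp
    _ = ∑ K ∈ vcomps n, ∑ c : Composition K.length,
          expLogWeight ((K.splitWrtComposition c).map List.length) •
            ((K.splitWrtComposition c).flatten.map S).prod := by
        refine Finset.sum_congr rfl fun K _ => ?_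
        rw [expLogCoeff, Finset.sum_smul]
        refine Finset.sum_congr rfl fun c _ => ?_
        rw [List.map_length_splitWrtComposition, List.flatten_splitWrtComposition]
    _ = ∑ I ∈ vcomps n, ∑ P ∈ sectionsFinset vcomps I,
          expLogWeight (P.map List.length) • (P.flatten.map S).prod :=
        (sum_vcomps_sum_sectionsFinset n
          fun P => expLogWeight (P.map List.length) • (P.flatten.map S).prod).symm
    _ = _ := Finset.sum_congr rfl fun I hI =>
        (smul_prod_map_eq_sum_sectionsFinset hΦ (mem_vcomps.1 hI).1).symm
end

section
/- The monomial level-l quasisymmetric functions satisfy the quasi-shuffle product rule: M_I · M_J = Σ_K M_K, where the sum is over all quasi-shuffles K of the vector compositions I and J (shuffles of the columns of I with the columns of J in which a column of I and a column of J may be merged by vector addition as they pass each other). -/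
open scoped Classical

/-- The multiset of quasi-shuffles of two lists of columns: shuffles of the
columns of `I` with the columns of `J` in which a column of `I` and a column
of `J` may be merged by vector addition as they pass each other. -/
def qsh {l : ℕ} : List (Fin l → ℕ) → List (Fin l → ℕ) → Multiset (List (Fin l → ℕ))
  | [], J => {J}
  | a :: I, [] => {a :: I}
  | a :: I, b :: J =>
      (qsh I (b :: J)).map (a :: ·) + (qsh (a :: I) J).map (b :: ·) +
        (qsh I J).map fun K => (a + b) :: K
  termination_by I J => I.length + J.length
  decreasing_by all_goals (simp [List.length]; try omega)

/-- The level-`l` monomial quasisymmetric function `M_I`, as a formal power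
series in the colored commuting variables `x_j^{(c)}` (`j ∈ ℕ`, `c` a color):
`M_I = Σ_{j_1 < ⋯ < j_m} x_{j_1}^{i_1} ⋯ x_{j_m}^{i_m}`, where
`x_j^{v} = Π_c (x_j^{(c)})^{v c}`. -/
noncomputable def Mfun (l : ℕ) (I : List (Fin l → ℕ)) :
    MvPowerSeries (ℕ × Fin l) ℚ := fun d =>
  if ∃ j : Fin I.length → ℕ, StrictMono j ∧
      ∀ (a : ℕ) (c : Fin l),
        d (a, c) = ∑ k : Fin I.length, if a = j k then I.get k c else 0
    then 1 else 0


/-!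
Write `S` for the substitution `x_a ↦ x_{a+1}` of the row variables. For `v ≠ 0`,
`M_{vI} = S M_{vI} + x_0^v · S M_I`, according to whether the first column of `vI` avoids row `0`
or sits there. Multiplying two such identities, and splitting the quasi-shuffles of `aI` and `bJ`
by their first column, shows (by induction on the lengths) that both sides `F` of the product
rule satisfy `F = S F + T` for the same `T`, and both have constant term `0`. This determines
`F`, because a power series fixed by `S` is constant: a nonconstant monomial in rows `< N` does
not occur in `S^N G`.
-/

namespace MonomialQSym

open MvPowerSeries

section Rows

variable {C : Type*}

def rowZero : C ↪ ℕ × C := ⟨fun c => (0, c), fun _ _ h => (Prod.ext_iff.1 h).2⟩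

def shiftRow : ℕ × C ↪ ℕ × C :=
  ⟨fun p => (p.1 + 1, p.2), fun p q h => by
    simp only [Prod.ext_iff, Nat.add_right_cancel_iff] at h; exact Prod.ext h.1 h.2⟩

@[simp] lemma rowZero_apply (c : C) : rowZero c = (0, c) := rfl

@[simp] lemma shiftRow_apply (p : ℕ × C) : shiftRow p = (p.1 + 1, p.2) := rfl

lemma ext_row_zero_succ {M : Type*} [Zero M] {d d' : (ℕ × C) →₀ M}
    (h0 : ∀ c, d (0, c) = d' (0, c)) (hsucc : ∀ a c, d (a + 1, c) = d' (a + 1, c)) : d = d' := by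
  ext ⟨a, c⟩
  cases a with
  | zero => exact h0 c
  | succ a => exact hsucc a c

variable [Finite C]

noncomputable def consRow (w : C → ℕ) (e : (ℕ × C) →₀ ℕ) : (ℕ × C) →₀ ℕ :=
  (Finsupp.equivFunOnFinite.symm w).embDomain rowZero + e.embDomain shiftRow

@[simp]
lemma consRow_apply_zero (w : C → ℕ) (e : (ℕ × C) →₀ ℕ) (c : C) : consRow w e (0, c) = w c := by
  have h : (0, c) ∉ Set.range shiftRow := by rintro ⟨p, hp⟩; simp at hp
  rw [consRow, Finsupp.add_apply, Finsupp.embDomain_of_notMem_range _ _ _ h, ← rowZero_apply,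
    Finsupp.embDomain_apply_self]
  simp

@[simp]
lemma consRow_apply_succ (w : C → ℕ) (e : (ℕ × C) →₀ ℕ) (a : ℕ) (c : C) :
    consRow w e (a + 1, c) = e (a, c) := by
  have h : (a + 1, c) ∉ Set.range rowZero := by rintro ⟨p, hp⟩; simp at hp
  rw [consRow, Finsupp.add_apply, Finsupp.embDomain_of_notMem_range _ _ _ h,
    show (a + 1, c) = shiftRow (a, c) from rfl, Finsupp.embDomain_apply_self, zero_add]

lemma consRow_surjective (d : (ℕ × C) →₀ ℕ) : ∃ w e, consRow w e = d :=
  ⟨fun c => d (0, c), d.comapDomain shiftRow shiftRow.injective.injOn,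
    ext_row_zero_succ (by simp) (by simp)⟩

lemma consRow_zero_left (e : (ℕ × C) →₀ ℕ) : consRow 0 e = e.embDomain shiftRow := by
  refine ext_row_zero_succ (fun c => ?_) (fun a c => ?_)
  · have h : (0, c) ∉ Set.range shiftRow := by rintro ⟨p, hp⟩; simp at hp
    simp [Finsupp.embDomain_of_notMem_range _ _ _ h]
  · rw [consRow_apply_succ, show (a + 1, c) = shiftRow (a, c) from rfl,
      Finsupp.embDomain_apply_self]

lemma consRow_add (v w : C → ℕ) (e f : (ℕ × C) →₀ ℕ) :
    consRow v e + consRow w f = consRow (v + w) (e + f) :=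
  ext_row_zero_succ (by simp) (by simp)

lemma consRow_le_consRow (v w : C → ℕ) (e : (ℕ × C) →₀ ℕ) :
    consRow v 0 ≤ consRow w e ↔ v ≤ w := by
  refine ⟨fun h c => by simpa using h (0, c), fun h => Finsupp.le_def.2 fun ⟨a, c⟩ => ?_⟩
  cases a with
  | zero => simpa using h c
  | succ a => simp

lemma consRow_sub (v w : C → ℕ) (e : (ℕ × C) →₀ ℕ) :
    consRow w e - consRow v 0 = consRow (w - v) e :=
  ext_row_zero_succ (by simp) (by simp)

end Rows

section Shift

variable {C : Type*} [Finite C] (R : Type*) [CommSemiring R]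

/-- The substitution `x_a^{(c)} ↦ x_{a+1}^{(c)}`. -/
noncomputable def shift : MvPowerSeries (ℕ × C) R →ₐ[R] MvPowerSeries (ℕ × C) R :=
  rename shiftRow

noncomputable def xZero (v : C → ℕ) : MvPowerSeries (ℕ × C) R := monomial (consRow v 0) 1

variable {R}

lemma coeff_consRow_shift (w : C → ℕ) (e : (ℕ × C) →₀ ℕ) (F : MvPowerSeries (ℕ × C) R) :
    coeff (consRow w e) (shift R F) = if w = 0 then coeff e F else 0 := by
  split_ifs with hw
  · rw [hw, consRow_zero_left, shift, coeff_embDomain_rename]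
  · refine coeff_rename_eq_zero _ _ fun ⟨e', he'⟩ => hw (funext fun c => ?_)
    rw [← Finsupp.embDomain_eq_mapDomain, ← consRow_zero_left] at he'
    simpa using congrArg (· (0, c)) he'.symm

lemma coeff_consRow_xZero_mul_shift (v w : C → ℕ) (e : (ℕ × C) →₀ ℕ)
    (F : MvPowerSeries (ℕ × C) R) :
    coeff (consRow w e) (xZero R v * shift R F) = if w = v then coeff e F else 0 := by
  rw [xZero, coeff_monomial_mul, one_mul]
  by_cases hvw : v ≤ w
  · rw [if_pos ((consRow_le_consRow v w e).2 hvw), consRow_sub, coeff_consRow_shift]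
    simp only [tsub_eq_zero_iff_le, hvw.ge_iff_eq']
  · rw [if_neg (mt (consRow_le_consRow v w e).1 hvw), if_neg]
    rintro rfl
    exact hvw le_rfl

lemma xZero_add (v w : C → ℕ) : xZero R (v + w) = xZero R v * xZero R w := by
  rw [xZero, xZero, xZero, monomial_mul_monomial, consRow_add, add_zero, one_mul]

lemma eq_zero_of_shift_eq_self {F : MvPowerSeries (ℕ × C) R} (hF : shift R F = F)
    (h0 : constantCoeff F = 0) : F = 0 := by
  suffices ∀ N, ∀ d : (ℕ × C) →₀ ℕ, (∀ a c, N ≤ a → d (a, c) = 0) → coeff d F = 0 by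
    ext d
    refine this (d.support.sup fun p => p.1 + 1) d fun a c ha => ?_
    by_contra hd
    have := Finset.le_sup (f := fun p : ℕ × C => p.1 + 1) (Finsupp.mem_support_iff.2 hd)
    simp only at this
    omega
  intro N
  induction N with
  | zero =>
    intro d hd
    rw [show d = 0 from Finsupp.ext fun p => hd p.1 p.2 (Nat.zero_le _),
      coeff_zero_eq_constantCoeff_apply, h0]
  | succ N ih =>
    intro d hd
    obtain ⟨w, e, rfl⟩ := consRow_surjective d
    rw [← hF, coeff_consRow_shift]
    split_ifs
    · exact ih e fun a c ha => by simpa using hd (a + 1) c (by omega)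
    · rfl

lemma eq_of_eq_shift_add {R : Type*} [CommRing R] {F G T : MvPowerSeries (ℕ × C) R}
    (hF : F = shift R F + T) (hG : G = shift R G + T) (h0 : constantCoeff F = constantCoeff G) :
    F = G := by
  rw [← sub_eq_zero]
  refine eq_zero_of_shift_eq_self ?_ (by rw [map_sub, h0, sub_self])
  rw [map_sub]
  linear_combination hG - hF

end Shift

lemma sum_ite_eq_of_injective {ι α M : Type*} [Fintype ι] [DecidableEq α] [AddCommMonoid M]
    {j : ι → α} (hj : Function.Injective j) (k₀ : ι) (f : ι → M) :
    (∑ k, if j k₀ = j k then f k else 0) = f k₀ := by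
  simp [hj.eq_iff]

variable {l : ℕ}

def IsPlacement (I : List (Fin l → ℕ)) (d : (ℕ × Fin l) →₀ ℕ) : Prop :=
  ∃ j : Fin I.length → ℕ, StrictMono j ∧
    ∀ (a : ℕ) (c : Fin l), d (a, c) = ∑ k : Fin I.length, if a = j k then I.get k c else 0

lemma coeff_mfun (I : List (Fin l → ℕ)) (d : (ℕ × Fin l) →₀ ℕ) :
    coeff d (Mfun l I) = if IsPlacement I d then 1 else 0 :=
  rfl

lemma isPlacement_nil (d : (ℕ × Fin l) →₀ ℕ) : IsPlacement [] d ↔ d = 0 := by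
  refine ⟨fun ⟨_, _, h⟩ => Finsupp.ext fun p => by simpa using h p.1 p.2, ?_⟩
  rintro rfl
  exact ⟨Fin.elim0, fun k => k.elim0, by simp⟩

lemma isPlacement_cons_iff (v : Fin l → ℕ) (I : List (Fin l → ℕ)) (d : (ℕ × Fin l) →₀ ℕ) :
    IsPlacement (v :: I) d ↔ ∃ j : Fin (I.length + 1) → ℕ, StrictMono j ∧
      ∀ (a : ℕ) (c : Fin l), d (a, c) =
        (if a = j 0 then v c else 0) + ∑ k : Fin I.length, if a = j k.succ then I.get k c else 0 :=
  exists_congr fun j => and_congr_right fun _ => forall₂_congr fun a c => by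
    show (d (a, c) = ∑ k : Fin (I.length + 1), _) ↔ _
    rw [Fin.sum_univ_succ]
    rfl

lemma not_isPlacement_cons_zero {v : Fin l → ℕ} (hv : v ≠ 0) (I : List (Fin l → ℕ)) :
    ¬ IsPlacement (v :: I) 0 := by
  rw [isPlacement_cons_iff]
  rintro ⟨j, hj, h⟩
  refine hv (funext fun c => ?_)
  have hrow := h (j 0) c
  rw [if_pos rfl, Finset.sum_eq_zero fun k _ => if_neg (hj (Fin.succ_pos k)).ne] at hrow
  simpa using hrow.symm

lemma isPlacement_consRow_zero {I : List (Fin l → ℕ)} (hI : ∀ v ∈ I, v ≠ 0)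
    (e : (ℕ × Fin l) →₀ ℕ) : IsPlacement I (consRow 0 e) ↔ IsPlacement I e := by
  constructor
  · rintro ⟨j, hj, h⟩
    have hpos : ∀ k, j k ≠ 0 := by
      intro k hk
      refine hI _ (I.get_mem k) (funext fun c => ?_)
      have hrow := h (j k) c
      rw [sum_ite_eq_of_injective hj.injective, hk, consRow_apply_zero] at hrow
      exact hrow.symm
    refine ⟨fun k => j k - 1, fun k k' hkk' => ?_, fun a c => ?_⟩
    · have := hj hkk'; have := hpos k
      change j k - 1 < j k' - 1
      omega
    · rw [← consRow_apply_succ 0 e, h]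
      refine Finset.sum_congr rfl fun k _ => if_congr ?_ rfl rfl
      have := hpos k
      dsimp only
      omega
  · rintro ⟨j, hj, h⟩
    refine ⟨fun k => j k + 1, hj.add_const 1, fun a c => ?_⟩
    cases a with
    | zero => simp
    | succ a => simp [h]

lemma isPlacement_cons_consRow {w : Fin l → ℕ} (hw : w ≠ 0) (v : Fin l → ℕ)
    (I : List (Fin l → ℕ)) (e : (ℕ × Fin l) →₀ ℕ) :
    IsPlacement (v :: I) (consRow w e) ↔ w = v ∧ IsPlacement I e := by
  rw [isPlacement_cons_iff]
  constructor
  · rintro ⟨j, hj, h⟩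
    have hj0 : j 0 = 0 := by
      by_contra hj0
      refine hw (funext fun c => ?_)
      rw [← consRow_apply_zero w e c, h, if_neg (Ne.symm hj0),
        Finset.sum_eq_zero fun k _ => if_neg fun hk => hj0 ?_]
      · rfl
      · have := hj (Fin.succ_pos k); omega
    refine ⟨funext fun c => ?_, fun k => j k.succ - 1, fun k k' hkk' => ?_, fun a c => ?_⟩
    · rw [← consRow_apply_zero w e c, h, if_pos hj0.symm,
        Finset.sum_eq_zero fun k _ => if_neg fun hk => ?_, add_zero]
      have := hj (Fin.succ_pos k)
      omega
    · have := hj (Fin.succ_lt_succ_iff.2 hkk'); have := hj (Fin.succ_pos k)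
      change j k.succ - 1 < j k'.succ - 1
      omega
    · rw [← consRow_apply_succ w e, h, hj0, if_neg (Nat.succ_ne_zero a), zero_add]
      refine Finset.sum_congr rfl fun k _ => if_congr ?_ rfl rfl
      have := hj (Fin.succ_pos k)
      dsimp only
      omega
  · rintro ⟨rfl, j, hj, h⟩
    refine ⟨Fin.cons 0 fun k => j k + 1,
      Fin.strictMono_cons.2 ⟨fun _ => Nat.succ_pos _, hj.add_const 1⟩, fun a c => ?_⟩
    cases a with
    | zero => simp
    | succ a => simp [h]

lemma mfun_nil : Mfun l [] = 1 := by
  ext d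
  simp only [coeff_mfun, isPlacement_nil, coeff_one]

lemma constantCoeff_mfun_cons {v : Fin l → ℕ} (hv : v ≠ 0) (I : List (Fin l → ℕ)) :
    constantCoeff (Mfun l (v :: I)) = 0 := by
  rw [← coeff_zero_eq_constantCoeff_apply, coeff_mfun, if_neg (not_isPlacement_cons_zero hv I)]

lemma mfun_cons {v : Fin l → ℕ} (hv : v ≠ 0) {I : List (Fin l → ℕ)} (hI : ∀ w ∈ I, w ≠ 0) :
    Mfun l (v :: I) = shift ℚ (Mfun l (v :: I)) + xZero ℚ v * shift ℚ (Mfun l I) := by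
  ext d
  obtain ⟨w, e, rfl⟩ := consRow_surjective d
  rw [map_add, coeff_consRow_shift, coeff_consRow_xZero_mul_shift]
  by_cases hw : w = 0
  · subst hw
    rw [coeff_mfun, coeff_mfun, isPlacement_consRow_zero (List.forall_mem_cons.2 ⟨hv, hI⟩),
      if_pos rfl, if_neg (Ne.symm hv), add_zero]
  · rw [coeff_mfun, coeff_mfun, isPlacement_cons_consRow hw, if_neg hw, zero_add]
    by_cases hwv : w = v <;> simp [hwv, coeff_mfun]

lemma mfun_cons_mul_mfun_cons {a b : Fin l → ℕ} (ha : a ≠ 0) (hb : b ≠ 0)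
    {I J : List (Fin l → ℕ)} (hI : ∀ v ∈ I, v ≠ 0) (hJ : ∀ v ∈ J, v ≠ 0) :
    Mfun l (a :: I) * Mfun l (b :: J) = shift ℚ (Mfun l (a :: I) * Mfun l (b :: J)) +
      (xZero ℚ a * shift ℚ (Mfun l I * Mfun l (b :: J)) +
        xZero ℚ b * shift ℚ (Mfun l (a :: I) * Mfun l J) +
        xZero ℚ (a + b) * shift ℚ (Mfun l I * Mfun l J)) := by
  conv_lhs => rw [mfun_cons ha hI, mfun_cons hb hJ]
  simp only [map_mul, xZero_add]
  ring

lemma sum_mfun_cons {v : Fin l → ℕ} (hv : v ≠ 0) {X : Multiset (List (Fin l → ℕ))}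
    (hX : ∀ K ∈ X, ∀ w ∈ K, w ≠ 0) :
    ((X.map (v :: ·)).map (Mfun l)).sum = shift ℚ ((X.map (v :: ·)).map (Mfun l)).sum +
      xZero ℚ v * shift ℚ (X.map (Mfun l)).sum := by
  simp only [Multiset.map_map, Function.comp_def, map_multiset_sum,
    ← Multiset.sum_map_mul_left, ← Multiset.sum_map_add]
  exact congrArg _ (Multiset.map_congr rfl fun K hK => mfun_cons hv (hX K hK))

lemma constantCoeff_sum_mfun_cons {v : Fin l → ℕ} (hv : v ≠ 0) (X : Multiset (List (Fin l → ℕ))) :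
    constantCoeff ((X.map (v :: ·)).map (Mfun l)).sum = 0 := by
  simp [map_multiset_sum, Multiset.map_map, constantCoeff_mfun_cons hv]

lemma ne_zero_of_mem_qsh {I J : List (Fin l → ℕ)} (hI : ∀ v ∈ I, v ≠ 0) (hJ : ∀ v ∈ J, v ≠ 0) :
    ∀ K ∈ qsh I J, ∀ v ∈ K, v ≠ 0 := by
  induction I, J using qsh.induct with
  | case1 J => simpa [qsh] using hJ
  | case2 a I => simpa [qsh] using hI
  | case3 a I b J ih₁ ih₂ ih₃ =>
    obtain ⟨ha, hI'⟩ := List.forall_mem_cons.1 hI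
    obtain ⟨hb, hJ'⟩ := List.forall_mem_cons.1 hJ
    have hab : a + b ≠ 0 := add_ne_zero.2 (Or.inl ha)
    rw [qsh]
    rintro K hK
    simp only [Multiset.mem_add, Multiset.mem_map] at hK
    rcases hK with (⟨K, hK, rfl⟩ | ⟨K, hK, rfl⟩) | ⟨K, hK, rfl⟩
    · exact List.forall_mem_cons.2 ⟨ha, ih₁ hI' hJ K hK⟩
    · exact List.forall_mem_cons.2 ⟨hb, ih₂ hI hJ' K hK⟩
    · exact List.forall_mem_cons.2 ⟨hab, ih₃ hI' hJ' K hK⟩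

lemma sum_mfun_qsh_cons_cons {a b : Fin l → ℕ} (ha : a ≠ 0) (hb : b ≠ 0)
    {I J : List (Fin l → ℕ)} (hI : ∀ v ∈ I, v ≠ 0) (hJ : ∀ v ∈ J, v ≠ 0) :
    ((qsh (a :: I) (b :: J)).map (Mfun l)).sum =
      shift ℚ ((qsh (a :: I) (b :: J)).map (Mfun l)).sum +
        (xZero ℚ a * shift ℚ ((qsh I (b :: J)).map (Mfun l)).sum +
          xZero ℚ b * shift ℚ ((qsh (a :: I) J).map (Mfun l)).sum +
          xZero ℚ (a + b) * shift ℚ ((qsh I J).map (Mfun l)).sum) := by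
  have hab : a + b ≠ 0 := add_ne_zero.2 (Or.inl ha)
  have hI' : ∀ v ∈ a :: I, v ≠ 0 := List.forall_mem_cons.2 ⟨ha, hI⟩
  have hJ' : ∀ v ∈ b :: J, v ≠ 0 := List.forall_mem_cons.2 ⟨hb, hJ⟩
  simp only [qsh.eq_3 a I b J, Multiset.map_add, Multiset.sum_add, map_add]
  conv_lhs => rw [sum_mfun_cons ha (ne_zero_of_mem_qsh hI hJ'),
    sum_mfun_cons hb (ne_zero_of_mem_qsh hI' hJ), sum_mfun_cons hab (ne_zero_of_mem_qsh hI hJ)]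
  ring

lemma constantCoeff_sum_mfun_qsh_cons_cons {a b : Fin l → ℕ} (ha : a ≠ 0) (hb : b ≠ 0)
    (I J : List (Fin l → ℕ)) : constantCoeff ((qsh (a :: I) (b :: J)).map (Mfun l)).sum = 0 := by
  have hab : a + b ≠ 0 := add_ne_zero.2 (Or.inl ha)
  rw [qsh, Multiset.map_add, Multiset.map_add, Multiset.sum_add, Multiset.sum_add, map_add, map_add,
    constantCoeff_sum_mfun_cons ha, constantCoeff_sum_mfun_cons hb,
    constantCoeff_sum_mfun_cons hab, add_zero, add_zero]

end MonomialQSym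

open MonomialQSym

/-- The monomial level-`l` quasisymmetric functions satisfy the quasi-shuffle
product rule: `M_I · M_J = Σ_K M_K`, the sum over all quasi-shuffles `K` of
the vector compositions `I` and `J` (with multiplicity). -/
theorem monomial_quasi_shuffle {l : ℕ} (I J : List (Fin l → ℕ))
    (hI : ∀ v ∈ I, v ≠ 0) (hJ : ∀ v ∈ J, v ≠ 0) :
    Mfun l I * Mfun l J = ((qsh I J).map (Mfun l)).sum := by
  induction I, J using qsh.induct with
  | case1 J => simp [qsh, mfun_nil]
  | case2 a I => simp [qsh, mfun_nil]
  | case3 a I b J ih₁ ih₂ ih₃ =>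
    obtain ⟨ha, hI'⟩ := List.forall_mem_cons.1 hI
    obtain ⟨hb, hJ'⟩ := List.forall_mem_cons.1 hJ
    refine eq_of_eq_shift_add (mfun_cons_mul_mfun_cons ha hb hI' hJ') ?_ ?_
    · rw [ih₁ hI' hJ, ih₂ hI hJ', ih₃ hI' hJ']
      exact sum_mfun_qsh_cons_cons ha hb hI' hJ'
    · rw [map_mul, constantCoeff_mfun_cons ha, zero_mul,
        constantCoeff_sum_mfun_qsh_cons_cons ha hb]
end

section
/- The antipode of QSym^(l) on the monomial basis is given by apode(M_I) = (-1)^{len(I)} Σ_{J ⊴ rev(I)} M_J, where rev(I) reverses the columns of I and J ⊴ rev(I) means rev(I) refines to J, i.e., J is obtained from rev(I) by merging adjacent columns (J is coarser than rev(I) in the refinement order). -/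
open scoped Classical

/-- The quasi-shuffle product on `QSym^(l)`, realized as the free `ℚ`-module
on vector compositions (basis element `I` playing the role of `M_I`),
extended bilinearly from the quasi-shuffle of basis elements. -/
noncomputable def qmulF {l : ℕ} (x y : List (Fin l → ℕ) →₀ ℚ) :
    List (Fin l → ℕ) →₀ ℚ :=
  x.sum fun I a => y.sum fun J b =>
    (a * b) • ((qsh I J).map fun K => Finsupp.single K (1 : ℚ)).sum

/-- `Coarsens J L` means `J ⊴ L`, i.e. `L` is a refinement of `J`: `J` is
obtained from `L` by merging (adding) adjacent columns. -/
def Coarsens {l : ℕ} (J L : List (Fin l → ℕ)) : Prop :=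
  ∃ Bs : List (List (Fin l → ℕ)),
    Bs.flatten = L ∧ (∀ B ∈ Bs, B ≠ []) ∧ J = Bs.map List.sum

section Aux
variable {l : ℕ}

lemma qsh_nil_right (I : List (Fin l → ℕ)) : qsh I [] = {I} := by
  cases I <;> simp [qsh]

noncomputable def MM (S : Multiset (List (Fin l → ℕ))) : List (Fin l → ℕ) →₀ ℚ :=
  (S.map fun J => Finsupp.single J (1 : ℚ)).sum

lemma MM_add (S T : Multiset (List (Fin l → ℕ))) : MM (S + T) = MM S + MM T := by
  simp [MM]

lemma MM_singleton (J : List (Fin l → ℕ)) : MM {J} = Finsupp.single J 1 := by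
  simp [MM]

def coars : List (Fin l → ℕ) → Multiset (List (Fin l → ℕ))
  | [] => {[]}
  | [a] => {[a]}
  | a :: b :: L => ((coars (b :: L)).map (a :: ·)) + coars ((a + b) :: L)
  termination_by L => L.length

def addFirst (b : Fin l → ℕ) : List (Fin l → ℕ) → List (Fin l → ℕ)
  | [] => []
  | j :: J => (b + j) :: J

lemma coars_head : ∀ (L : List (Fin l → ℕ)) (c : Fin l → ℕ) (J), J ∈ coars (c :: L) →
    ∃ d J', J = (c + d) :: J'
  | [], c, J, h => by
      simp [coars] at h; exact ⟨0, [], by simp [h]⟩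
  | b :: L, c, J, h => by
      rw [coars] at h
      simp only [Multiset.mem_add, Multiset.mem_map] at h
      rcases h with ⟨K, hK, rfl⟩ | h
      · exact ⟨0, K, by simp⟩
      · obtain ⟨d, J', rfl⟩ := coars_head L (c + b) J h
        exact ⟨b + d, J', by rw [add_assoc]⟩
  termination_by L => L.length

lemma coars_ne_nil {L : List (Fin l → ℕ)} {c : Fin l → ℕ} {J} (h : J ∈ coars (c :: L)) :
    J ≠ [] := by
  obtain ⟨d, J', rfl⟩ := coars_head L c J h; simp

lemma coars_addFirst : ∀ (M : List (Fin l → ℕ)) (c b : Fin l → ℕ),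
    (coars (c :: M)).map (addFirst b) = coars ((b + c) :: M)
  | [], c, b => by simp [coars, addFirst]
  | d :: M', c, b => by
      rw [coars, coars]
      rw [Multiset.map_add, Multiset.map_map]
      have h1 : (addFirst b ∘ (c :: ·)) = ((b + c) :: ·) := by
        funext J; simp [addFirst]
      rw [h1, coars_addFirst M' (c + d) b, add_assoc]
  termination_by M => M.length

lemma coars_cons (b : Fin l → ℕ) (s : Fin l → ℕ) (S' : List (Fin l → ℕ)) :
    coars (b :: s :: S') = (coars (s :: S')).map (b :: ·) +
      (coars (s :: S')).map (addFirst b) := by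
  rw [coars, coars_addFirst]

/-- quasi-shuffles of `J` and `L` where the head of `J` is pinned at the front. -/
def pinnedF (L : List (Fin l → ℕ)) : List (Fin l → ℕ) → Multiset (List (Fin l → ℕ))
  | [] => 0
  | j :: J' => (qsh J' L).map (j :: ·)

noncomputable def pinned (S L : List (Fin l → ℕ)) : Multiset (List (Fin l → ℕ)) :=
  (coars S).bind (fun J => pinnedF L J)

lemma pinned_nil (c : Fin l → ℕ) (S' : List (Fin l → ℕ)) :
    pinned (c :: S') [] = coars (c :: S') := by
  unfold pinned
  have : ∀ J ∈ coars (c :: S'), pinnedF [] J = {J} := by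
    intro J hJ
    obtain ⟨j, J', rfl⟩ : ∃ j J'', J = j :: J'' :=
      List.exists_cons_of_ne_nil (coars_ne_nil hJ)
    simp [pinnedF, qsh_nil_right]
  rw [Multiset.bind_congr this, Multiset.bind_singleton, Multiset.map_id']

lemma per_J (J : List (Fin l → ℕ)) (hJ : J ≠ []) (b : Fin l → ℕ) (L : List (Fin l → ℕ)) :
    qsh J (b :: L) = pinnedF (b :: L) J + ((qsh J L).map (b :: ·) + pinnedF L (addFirst b J)) := by
  obtain ⟨j, J', rfl⟩ := List.exists_cons_of_ne_nil hJ
  rw [qsh, pinnedF, addFirst, pinnedF]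
  have : (fun K => (j + b) :: K) = ((b + j) :: ·) := by
    funext K; rw [add_comm]
  rw [this, add_assoc]

lemma key (c : Fin l → ℕ) (S' : List (Fin l → ℕ)) (b : Fin l → ℕ) (L : List (Fin l → ℕ)) :
    (coars (c :: S')).bind (fun J => qsh J (b :: L)) =
      pinned (c :: S') (b :: L) + pinned (b :: c :: S') L := by
  have h1 : (coars (c :: S')).bind (fun J => qsh J (b :: L)) =
      (coars (c :: S')).bind (fun J =>
        pinnedF (b :: L) J + ((qsh J L).map (b :: ·) + pinnedF L (addFirst b J))) :=
    Multiset.bind_congr (fun J hJ => per_J J (coars_ne_nil hJ) b L)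
  rw [h1, Multiset.bind_add, Multiset.bind_add]
  rw [pinned, pinned, coars_cons b c S', Multiset.add_bind, Multiset.bind_map,
    Multiset.bind_map]
  simp only [pinnedF]
  rfl

noncomputable def PsiR : List (Fin l → ℕ) → List (Fin l → ℕ) → (List (Fin l → ℕ) →₀ ℚ)
  | S, [] => MM (coars S)
  | S, b :: L => MM ((coars S).bind (fun J => qsh J (b :: L))) - PsiR (b :: S) L
  termination_by _ L => L.length

lemma PsiR_eq_pinned : ∀ (L : List (Fin l → ℕ)) (c : Fin l → ℕ) (S' : List (Fin l → ℕ)),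
    PsiR (c :: S') L = MM (pinned (c :: S') L)
  | [], c, S' => by rw [PsiR, pinned_nil]
  | b :: L, c, S' => by
      rw [PsiR, key, MM_add, PsiR_eq_pinned L b (c :: S')]
      abel
  termination_by L => L.length

lemma PsiR_nil_left (L : List (Fin l → ℕ)) :
    PsiR [] L = if L = [] then Finsupp.single ([] : List (Fin l → ℕ)) (1 : ℚ) else 0 := by
  cases L with
  | nil => rw [PsiR]; simp [coars, MM_singleton]
  | cons v L' =>
      rw [PsiR, PsiR_eq_pinned]
      have h1 : coars ([] : List (Fin l → ℕ)) = {[]} := by rw [coars]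
      have h2 : (coars ([] : List (Fin l → ℕ))).bind (fun J => qsh J (v :: L')) = {v :: L'} := by
        rw [h1, Multiset.singleton_bind]; simp [qsh]
      have h3 : pinned [v] L' = {v :: L'} := by
        unfold pinned
        have : coars [v] = {[v]} := by rw [coars]
        rw [this, Multiset.singleton_bind]
        simp [pinnedF, qsh]
      rw [h2, h3]
      simp

lemma bridge : ∀ (I : List (Fin l → ℕ)) (S : List (Fin l → ℕ)),
    ∑ m ∈ Finset.range (I.length + 1),
      ((-1 : ℚ) ^ m) • MM (((coars ((I.take m).reverse ++ S)).bind (fun J => qsh J (I.drop m))))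
    = PsiR S I := by
  intro I
  induction I with
  | nil =>
      intro S
      simp only [List.length_nil, Finset.sum_range_one, pow_zero, one_smul,
        List.take_nil, List.reverse_nil, List.nil_append, List.drop_nil]
      rw [PsiR]
      have : ∀ J ∈ coars S, qsh J [] = ({J} : Multiset (List (Fin l → ℕ))) :=
        fun J _ => qsh_nil_right J
      rw [Multiset.bind_congr this, Multiset.bind_singleton, Multiset.map_id']
      simp
  | cons v I' ih =>
      intro S
      rw [Finset.sum_range_succ']
      have hlen : (v :: I').length + 1 = I'.length + 1 + 1 := by simp
      rw [show (v :: I').length = I'.length + 1 from by simp]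
      have hterm : ∀ m, (((v :: I').take (m + 1)).reverse ++ S) =
          ((I'.take m).reverse ++ (v :: S)) := by
        intro m
        simp [List.take_succ_cons, List.reverse_cons, List.append_assoc]
      have hstep : ∀ m ∈ Finset.range (I'.length + 1),
          ((-1 : ℚ) ^ (m + 1)) • MM (((coars (((v :: I').take (m + 1)).reverse ++ S)).bind
              (fun J => qsh J ((v :: I').drop (m + 1)))))
          = -(((-1 : ℚ) ^ m) • MM (((coars ((I'.take m).reverse ++ (v :: S))).bind
              (fun J => qsh J (I'.drop m))))) := by
        intro m _
        rw [hterm m, List.drop_succ_cons, pow_succ]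
        rw [mul_comm, neg_one_mul, neg_smul]
      rw [Finset.sum_congr rfl hstep, Finset.sum_neg_distrib, ih (v :: S)]
      simp only [List.take_zero, List.reverse_nil, List.nil_append, List.drop_zero, pow_zero,
        one_smul]
      rw [PsiR]
      abel

lemma MAIN (I : List (Fin l → ℕ)) :
    ∑ m ∈ Finset.range (I.length + 1),
      ((-1 : ℚ) ^ m) • MM (((coars ((I.take m).reverse)).bind (fun J => qsh J (I.drop m))))
    = if I = [] then Finsupp.single ([] : List (Fin l → ℕ)) (1 : ℚ) else 0 := by
  have := bridge I []
  simp only [List.append_nil] at this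
  rw [this, PsiR_nil_left]


lemma qmulF_single_right (x : List (Fin l → ℕ) →₀ ℚ) (K : List (Fin l → ℕ)) :
    qmulF x (Finsupp.single K 1) = x.sum fun I a => a • MM (qsh I K) := by
  unfold qmulF MM
  congr 1
  funext I a
  rw [Finsupp.sum_single_index]
  · rw [mul_one]
  · rw [mul_zero, zero_smul]

lemma qmulF_one_right (x : List (Fin l → ℕ) →₀ ℚ) :
    qmulF x (Finsupp.single ([] : List (Fin l → ℕ)) 1) = x := by
  rw [qmulF_single_right]
  have : ∀ (I : List (Fin l → ℕ)) (a : ℚ), a • MM (qsh I []) = Finsupp.single I a := by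
    intro I a
    rw [qsh_nil_right, MM_singleton, Finsupp.smul_single, smul_eq_mul, mul_one]
  simp only [this]
  exact Finsupp.sum_single x

lemma qmulF_MM (S : Multiset (List (Fin l → ℕ))) (K : List (Fin l → ℕ)) :
    qmulF (MM S) (Finsupp.single K 1) = MM (S.bind (fun J => qsh J K)) := by
  rw [qmulF_single_right]
  induction S using Multiset.induction with
  | empty => simp [MM]
  | cons a S ih =>
      have hMM : MM (a ::ₘ S) = Finsupp.single a 1 + MM S := by
        rw [MM, Multiset.map_cons, Multiset.sum_cons]; rfl
      rw [hMM, Finsupp.sum_add_index', Multiset.cons_bind, MM_add, ← ih]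
      · congr 1
        rw [Finsupp.sum_single_index]
        · rw [one_smul]
        · rw [zero_smul]
      · intro i; rw [zero_smul]
      · intro i b1 b2; rw [add_smul]

lemma qmulF_smul_left (c : ℚ) (x : List (Fin l → ℕ) →₀ ℚ) (K : List (Fin l → ℕ)) :
    qmulF (c • x) (Finsupp.single K 1) = c • qmulF x (Finsupp.single K 1) := by
  rw [qmulF_single_right, qmulF_single_right]
  rw [Finsupp.sum_smul_index (fun i => by rw [zero_smul])]
  rw [Finsupp.smul_sum]
  congr 1
  funext I a
  rw [mul_smul]

noncomputable def apC (I : List (Fin l → ℕ)) : List (Fin l → ℕ) →₀ ℚ :=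
  ((-1 : ℚ) ^ I.length) • MM (coars I.reverse)

lemma cand_sum (I : List (Fin l → ℕ)) :
    ∑ m ∈ Finset.range (I.length + 1),
      qmulF (apC (I.take m)) (Finsupp.single (I.drop m) 1)
    = if I = [] then Finsupp.single ([] : List (Fin l → ℕ)) (1 : ℚ) else 0 := by
  rw [← MAIN I]
  apply Finset.sum_congr rfl
  intro m hm
  rw [Finset.mem_range] at hm
  have hlen : (I.take m).length = m := by
    rw [List.length_take]
    omega
  rw [apC, qmulF_smul_left, qmulF_MM, hlen]

lemma uniq (apode : (List (Fin l → ℕ) →₀ ℚ) →ₗ[ℚ] (List (Fin l → ℕ) →₀ ℚ))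
    (hap : ∀ I : List (Fin l → ℕ), (∀ v ∈ I, v ≠ 0) →
      ∑ m ∈ Finset.range (I.length + 1),
          qmulF (apode (Finsupp.single (I.take m) 1))
            (Finsupp.single (I.drop m) 1)
        = if I = [] then Finsupp.single ([] : List (Fin l → ℕ)) (1 : ℚ)
          else 0) :
    ∀ (n : ℕ) (I : List (Fin l → ℕ)), I.length = n → (∀ v ∈ I, v ≠ 0) →
      apode (Finsupp.single I 1) = apC I := by
  intro n
  induction n using Nat.strong_induction_on with
  | _ n ih =>
    intro I hn h
    subst hn
    have h1 := hap I h
    have h2 := cand_sum I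
    rw [Finset.sum_range_succ, List.take_length, List.drop_length, qmulF_one_right] at h1 h2
    have h3 : ∀ m ∈ Finset.range I.length,
        qmulF (apode (Finsupp.single (I.take m) 1)) (Finsupp.single (I.drop m) 1) =
        qmulF (apC (I.take m)) (Finsupp.single (I.drop m) 1) := by
      intro m hm
      rw [Finset.mem_range] at hm
      have hlen : (I.take m).length = m := by rw [List.length_take]; omega
      rw [ih m hm (I.take m) hlen (fun v hv => h v (List.take_subset m I hv))]
    rw [Finset.sum_congr rfl h3] at h1
    have hA : apode (Finsupp.single I 1) =
        (if I = [] then Finsupp.single ([] : List (Fin l → ℕ)) (1 : ℚ) else 0) -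
          ∑ m ∈ Finset.range I.length,
            qmulF (apC (I.take m)) (Finsupp.single (I.drop m) 1) := by
      rw [eq_sub_iff_add_eq, add_comm]; exact h1
    have hC : apC I =
        (if I = [] then Finsupp.single ([] : List (Fin l → ℕ)) (1 : ℚ) else 0) -
          ∑ m ∈ Finset.range I.length,
            qmulF (apC (I.take m)) (Finsupp.single (I.drop m) 1) := by
      rw [eq_sub_iff_add_eq, add_comm]; exact h2
    rw [hA, hC]


lemma blocks_destruct {Bs : List (List (Fin l → ℕ))} {a : Fin l → ℕ} {L : List (Fin l → ℕ)}
    (hf : Bs.flatten = a :: L) (hne : ∀ B ∈ Bs, B ≠ []) :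
    ∃ B' Bs', Bs = (a :: B') :: Bs' ∧ B' ++ Bs'.flatten = L := by
  cases Bs with
  | nil => simp at hf
  | cons B Bs' =>
      have hB : B ≠ [] := hne B (by simp)
      obtain ⟨x, B', rfl⟩ := List.exists_cons_of_ne_nil hB
      rw [List.flatten_cons, List.cons_append] at hf
      obtain ⟨rfl, hrest⟩ := List.cons_eq_cons.mp hf
      exact ⟨B', Bs', rfl, hrest⟩

lemma mem_coars_imp : ∀ (L J : List (Fin l → ℕ)), J ∈ coars L → Coarsens J L
  | [], J, h => by
      rw [coars] at h
      rw [Multiset.mem_singleton] at h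
      exact ⟨[], by simp, by simp, by simp [h]⟩
  | [a], J, h => by
      rw [coars] at h
      rw [Multiset.mem_singleton] at h
      exact ⟨[[a]], by simp, by simp, by simp [h]⟩
  | a :: b :: L, J, h => by
      rw [coars] at h
      rw [Multiset.mem_add] at h
      rcases h with h | h
      · rw [Multiset.mem_map] at h
        obtain ⟨J', hJ', rfl⟩ := h
        obtain ⟨Bs, hf, hne, rfl⟩ := mem_coars_imp (b :: L) J' hJ'
        refine ⟨[a] :: Bs, by simp [hf], ?_, by simp⟩
        intro B hB
        rcases List.mem_cons.mp hB with rfl | h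
        · simp
        · exact hne B h
      · obtain ⟨Bs, hf, hne, rfl⟩ := mem_coars_imp ((a + b) :: L) J h
        obtain ⟨B', Bs', rfl, hrest⟩ := blocks_destruct hf hne
        refine ⟨(a :: b :: B') :: Bs', by simp [hrest], ?_, ?_⟩
        · intro B hB
          rcases List.mem_cons.mp hB with rfl | h
          · simp
          · exact hne B (by simp [h])
        · simp [List.sum_cons, add_assoc]
  termination_by L => L.length


lemma mem_cons_coars {L : List (Fin l → ℕ)} (a : Fin l → ℕ) {J : List (Fin l → ℕ)}
    (h : J ∈ coars L) : a :: J ∈ coars (a :: L) := by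
  cases L with
  | nil =>
      rw [coars] at h
      rw [Multiset.mem_singleton] at h
      subst h
      rw [coars]
      simp
  | cons b L'' =>
      rw [coars]
      rw [Multiset.mem_add]
      left
      rw [Multiset.mem_map]
      exact ⟨J, h, rfl⟩

lemma coarsens_imp_mem : ∀ (L J : List (Fin l → ℕ)), Coarsens J L → J ∈ coars L
  | [], J, ⟨Bs, hf, hne, hJ⟩ => by
      have hBs : Bs = [] := by
        cases Bs with
        | nil => rfl
        | cons B Bs' =>
            exfalso
            rw [List.flatten_cons] at hf
            exact hne B (by simp) (List.append_eq_nil_iff.mp hf).1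
      rw [coars, hJ, hBs]
      simp
  | a :: L, J, ⟨Bs, hf, hne, hJ⟩ => by
      obtain ⟨B', Bs', rfl, hrest⟩ := blocks_destruct hf hne
      cases B' with
      | nil =>
          simp only [List.nil_append] at hrest
          have hmem : (Bs'.map List.sum) ∈ coars L :=
            coarsens_imp_mem L _ ⟨Bs', hrest, fun B hB => hne B (by simp [hB]), rfl⟩
          have := mem_cons_coars a hmem
          rw [hJ]
          simpa using this
      | cons c B'' =>
          have hL : L = c :: (B'' ++ Bs'.flatten) := by
            rw [← hrest]; simp
          subst hL
          have hco : Coarsens J ((a + c) :: (B'' ++ Bs'.flatten)) := by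
            refine ⟨((a + c) :: B'') :: Bs', by simp, ?_, ?_⟩
            · intro B hB
              rcases List.mem_cons.mp hB with rfl | h
              · simp
              · exact hne B (by simp [h])
            · rw [hJ]; simp [List.sum_cons, add_assoc]
          have hmem := coarsens_imp_mem ((a + c) :: (B'' ++ Bs'.flatten)) J hco
          rw [coars]
          rw [Multiset.mem_add]
          right
          exact hmem
  termination_by L => L.length

lemma coars_nodup : ∀ (L : List (Fin l → ℕ)), (∀ v ∈ L, v ≠ 0) → (coars L).Nodup
  | [], _ => by rw [coars]; exact Multiset.nodup_singleton _
  | [a], _ => by rw [coars]; exact Multiset.nodup_singleton _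
  | a :: b :: L, h => by
      rw [coars, Multiset.nodup_add]
      have hb : b ≠ 0 := h b (by simp)
      refine ⟨Multiset.Nodup.map List.cons_injective
        (coars_nodup (b :: L) (fun v hv => h v (by simp [hv]))), ?_, ?_⟩
      · apply coars_nodup ((a + b) :: L)
        intro v hv
        rcases List.mem_cons.mp hv with rfl | hv
        · intro h0
          apply h a (by simp)
          funext x
          have := congrFun h0 x
          simp at this ⊢
          omega
        · exact h v (by simp [hv])
      · rw [Multiset.disjoint_left]
        intro J hJ1 hJ2
        rw [Multiset.mem_map] at hJ1
        obtain ⟨J', _, rfl⟩ := hJ1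
        obtain ⟨d, J'', hJ⟩ := coars_head L (a + b) _ hJ2
        have ha : a = a + b + d := (List.cons_eq_cons.mp hJ).1
        obtain ⟨x, hx⟩ := Function.ne_iff.mp hb
        have := congrFun ha x
        simp at this hx
        omega
  termination_by L => L.length

lemma coarsens_finsum (L : List (Fin l → ℕ)) (h : ∀ v ∈ L, v ≠ 0) :
    (∑ᶠ J ∈ {J : List (Fin l → ℕ) | Coarsens J L}, Finsupp.single J (1 : ℚ)) = MM (coars L) := by
  have hset : {J : List (Fin l → ℕ) | Coarsens J L} = ↑(coars L).toFinset := by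
    ext J
    simp only [Set.mem_setOf_eq, Finset.coe_sort_coe, Multiset.mem_toFinset, Finset.mem_coe]
    exact ⟨coarsens_imp_mem L J, mem_coars_imp L J⟩
  rw [hset, finsum_mem_coe_finset]
  have hval : (coars L).toFinset.val = coars L := by
    rw [Multiset.toFinset_val, Multiset.dedup_eq_self.mpr (coars_nodup L h)]
  rw [MM, Finset.sum, hval]

end Aux

/-- The antipode of `QSym^(l)` on the monomial basis is given by
`apode(M_I) = (-1)^{len(I)} Σ_{J ⊴ rev(I)} M_J`.  Here `QSym^(l)` is realized
as the free module on vector compositions with quasi-shuffle product and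
deconcatenation coproduct, and the antipode is characterized by the antipode
equation `Σ_{I = JK} apode(M_J) · M_K = ε(M_I) 1`. -/
theorem qsym_antipode_monomial {l : ℕ}
    (apode : (List (Fin l → ℕ) →₀ ℚ) →ₗ[ℚ] (List (Fin l → ℕ) →₀ ℚ))
    (hap : ∀ I : List (Fin l → ℕ), (∀ v ∈ I, v ≠ 0) →
      ∑ m ∈ Finset.range (I.length + 1),
          qmulF (apode (Finsupp.single (I.take m) 1))
            (Finsupp.single (I.drop m) 1)
        = if I = [] then Finsupp.single ([] : List (Fin l → ℕ)) (1 : ℚ)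
          else 0) :
    ∀ I : List (Fin l → ℕ), (∀ v ∈ I, v ≠ 0) →
      apode (Finsupp.single I 1) =
        ((-1 : ℚ) ^ I.length) •
          ∑ᶠ J ∈ {J : List (Fin l → ℕ) | Coarsens J I.reverse},
            Finsupp.single J (1 : ℚ) := by
  intro I h
  rw [uniq apode hap I.length I rfl h, apC,
    ← coarsens_finsum I.reverse (fun v hv => h v (List.mem_reverse.mp hv))]
end

section
/- For any odd integer k ≥ 1, the generating function f(t) = Σ_n dim(O^k_n) t^n of the k-odd subalgebra of QSym (level 1), whose n-th graded dimension equals the number of compositions of n with no part in {2,4,...,k-1}, satisfies f(t) = (1 - t²)/(1 - t - t² - t^{k+1}). -/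
/-!
A composition with all parts in a set `S ⊆ ℕ₊` is empty or a first part from `S` followed by
such a composition, so its generating function `C` satisfies `C = 1 + P C` with
`P = Σ_{i ∈ S} tⁱ`. For `S = {odd i ≤ k} ∪ {i > k}` with `k` odd, the odd terms of `P` telescope
and the tail is geometric, giving `(1 - t²) P = t + t^{k+1}`; multiplying `C (1 - P) = 1` by
`1 - t²` yields `C (1 - t - t² - t^{k+1}) = 1 - t²`.
-/

open PowerSeries Finset

namespace Composition

variable (p : ℕ → Prop) [DecidablePred p]

def blocksWith (n : ℕ) : Finset (List ℕ) :=
  ((univ : Finset (Composition n)).image blocks).filter (∀ i ∈ ·, p i)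

variable {p} in
theorem mem_blocksWith {n : ℕ} {I : List ℕ} :
    I ∈ blocksWith p n ↔ (∀ i ∈ I, 0 < i ∧ p i) ∧ I.sum = n := by
  simp only [blocksWith, mem_filter, mem_image, mem_univ, true_and]
  constructor
  · rintro ⟨⟨c, rfl⟩, hp⟩
    exact ⟨fun i hi => ⟨c.blocks_pos hi, hp i hi⟩, c.blocks_sum⟩
  · rintro ⟨h, rfl⟩
    exact ⟨⟨⟨I, fun hi => (h _ hi).1, rfl⟩, rfl⟩, fun i hi => (h i hi).2⟩

theorem blocksWith_succ (n : ℕ) :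
    blocksWith p (n + 1) = ((antidiagonal (n + 1)).filter fun ij => 0 < ij.1 ∧ p ij.1).biUnion
      fun ij => (blocksWith p ij.2).map ⟨List.cons ij.1, List.cons_injective⟩ := by
  ext (_ | ⟨a, J⟩)
  · simp [mem_blocksWith]
  · simp only [mem_blocksWith, mem_biUnion, mem_filter, HasAntidiagonal.mem_antidiagonal, mem_map,
      Function.Embedding.coeFn_mk, List.cons.injEq, List.mem_cons, List.sum_cons, Prod.exists]
    constructor
    · rintro ⟨h, hsum⟩
      exact ⟨a, J.sum, ⟨hsum, h a (Or.inl rfl)⟩, J, ⟨fun i hi => h i (Or.inr hi), rfl⟩, rfl, rfl⟩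
    · rintro ⟨i, j, ⟨hij, hi⟩, J', ⟨hJ', rfl⟩, rfl, rfl⟩
      exact ⟨by rintro x (rfl | hx); exacts [hi, hJ' x hx], hij⟩

theorem card_blocksWith_succ (n : ℕ) :
    (blocksWith p (n + 1)).card = ∑ ij ∈ antidiagonal (n + 1),
      if 0 < ij.1 ∧ p ij.1 then (blocksWith p ij.2).card else 0 := by
  rw [blocksWith_succ, card_biUnion, sum_filter]
  · simp only [card_map]
  · rintro ⟨i, j⟩ hij ⟨i', j'⟩ hij' hne
    simp only [coe_filter, HasAntidiagonal.mem_antidiagonal, Set.mem_ofPred_eq] at hij hij'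
    refine disjoint_left.mpr fun I hI hI' => hne ?_
    simp only [mem_map, Function.Embedding.coeFn_mk] at hI hI'
    obtain ⟨J, -, rfl⟩ := hI
    obtain ⟨J', -, hJ'⟩ := hI'
    obtain rfl := (List.cons_eq_cons.mp hJ').1
    simp only [Prod.mk.injEq, true_and]
    omega

theorem blocksWith_zero : blocksWith p 0 = {[]} := by
  ext I
  simp only [mem_blocksWith, mem_singleton]
  constructor
  · rintro ⟨h, hsum⟩
    exact List.eq_nil_iff_forall_not_mem.mpr fun i hi =>
      (h i hi).1.ne' (List.sum_eq_zero_iff.mp hsum i hi)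
  · rintro rfl
    simp

theorem natCard_eq_card_blocksWith (n : ℕ) :
    Nat.card {I : List ℕ // (∀ i ∈ I, 0 < i ∧ p i) ∧ I.sum = n} = (blocksWith p n).card := by
  rw [Nat.card_congr (Equiv.subtypeEquivRight fun I => mem_blocksWith.symm)]
  exact Nat.card_eq_finsetCard _

end Composition

section Semiring

variable (R : Type*) [Semiring R] (p : ℕ → Prop)

noncomputable def compositionSeries : R⟦X⟧ :=
  mk fun n => (Nat.card {I : List ℕ // (∀ i ∈ I, 0 < i ∧ p i) ∧ I.sum = n} : R)

variable [DecidablePred p]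

def partSeries : R⟦X⟧ :=
  mk fun i => if 0 < i ∧ p i then 1 else 0

theorem compositionSeries_eq_one_add_partSeries_mul :
    compositionSeries R p = 1 + partSeries R p * compositionSeries R p := by
  ext (_ | n)
  · simp [compositionSeries, partSeries, Composition.natCard_eq_card_blocksWith,
      Composition.blocksWith_zero]
  · simp [compositionSeries, partSeries, Composition.natCard_eq_card_blocksWith,
      Composition.card_blocksWith_succ, coeff_mul]

end Semiring

section CommRing

variable (R : Type*) [CommRing R]

theorem compositionSeries_mul_one_sub_partSeries (p : ℕ → Prop) [DecidablePred p] :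
    compositionSeries R p * (1 - partSeries R p) = 1 := by
  linear_combination compositionSeries_eq_one_add_partSeries_mul R p

theorem one_sub_X_sq_mul_partSeries_of_odd {k : ℕ} (hk : Odd k) :
    (1 - X ^ 2) * partSeries R (fun i => i ≤ k → Odd i) = X + X ^ (k + 1) := by
  ext n
  rw [Nat.odd_iff] at hk
  simp only [partSeries, sub_mul, one_mul, map_sub, map_add, coeff_X_pow_mul', coeff_mk, coeff_X,
    coeff_X_pow, Nat.odd_iff]
  split_ifs <;> first | omega | simp

end CommRing

/-- For any odd integer `k ≥ 1`, the generating function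
`f(t) = Σ_n dim(O^k_n) t^n` of the `k`-odd subalgebra of `QSym` (level 1),
whose `n`-th graded dimension equals the number of compositions of `n` with
no part in `{2, 4, …, k-1}` (equivalently, every part `i ≤ k` is odd),
satisfies `f(t) = (1 - t²)/(1 - t - t² - t^{k+1})`. -/
theorem kodd_hilbert_series (k : ℕ) (hk : Odd k) :
    (PowerSeries.mk fun n =>
        (Nat.card {I : List ℕ //
            (∀ i ∈ I, 0 < i ∧ (i ≤ k → Odd i)) ∧ I.sum = n} : ℚ)) *
      (1 - PowerSeries.X - PowerSeries.X ^ 2 - PowerSeries.X ^ (k + 1)) =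
    1 - PowerSeries.X ^ 2 := by
  have hC := compositionSeries_mul_one_sub_partSeries ℚ (fun i => i ≤ k → Odd i)
  have hP := one_sub_X_sq_mul_partSeries_of_odd ℚ hk
  change compositionSeries ℚ _ * _ = _
  linear_combination (1 - X ^ 2) * hC + compositionSeries ℚ _ * hP
end
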